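/- arXiv:1001.1060 — 2 statements merged into one kernel-verified Lean document; each statement's English description precedes it below -/
import Mathlib

section
/- The map F(z) = z + sinh z is injective on the closed strip {z ∈ ℂ : |Im z| ≤ π/2}: if z and z′ lie in this closed strip and F(z) = F(z′), then z = z′. -/
/-!
Noshiro–Warschawski: on a convex set, a holomorphic map whose derivative has positive real part
is injective, since `Re ((f z' - f z) / (z' - z))` is a mean value of `Re f'` along the segment
from `z` to `z'`. For `F(w) = w + sinh w` we have `Re F'(w) = 1 + cosh (Re w) cos (Im w) ≥ 1` on
the strip `|Im w| ≤ π/2`, which is convex.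
-/

open Real Set

theorem Complex.cosh_re (z : ℂ) : (Complex.cosh z).re = Real.cosh z.re * Real.cos z.im := by
  rw [← congrArg Complex.cosh (Complex.re_add_im z), Complex.cosh_add, Complex.cosh_mul_I,
    Complex.sinh_mul_I]
  simp [Complex.cos_ofReal_re, ← Complex.ofReal_cosh, ← Complex.ofReal_sinh, ← Complex.ofReal_sin]

theorem convex_abs_im_le (c : ℝ) : Convex ℝ {w : ℂ | |w.im| ≤ c} := by
  simpa only [abs_le, ofPred_and] using
    (convex_halfSpace_im_ge (-c)).inter (convex_halfSpace_im_le c)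

theorem Convex.injOn_of_hasDerivAt_of_re_pos {s : Set ℂ} (hs : Convex ℝ s) {f f' : ℂ → ℂ}
    (hf : ∀ w ∈ s, HasDerivAt f (f' w) w) (hf' : ∀ w ∈ s, 0 < (f' w).re) : InjOn f s := by
  intro z hz z' hz' hzz'
  by_contra hne
  set u := z' - z
  have hu : u ≠ 0 := sub_ne_zero.2 (Ne.symm hne)
  have hseg : ∀ t ∈ Icc (0 : ℝ) 1, z + t • u ∈ s := fun t ht => hs.add_smul_sub_mem hz hz' ht
  set g : ℝ → ℝ := fun t => (f (z + t • u) / u).re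
  have hg : ∀ t ∈ Icc (0 : ℝ) 1, HasDerivAt g (f' (z + t • u)).re t := by
    intro t ht
    have hγ : HasDerivAt (fun t : ℝ => z + t • u) u t := by
      simpa using ((hasDerivAt_id t).smul_const u).const_add z
    have := ((hf _ (hseg t ht)).comp t hγ).div_const u
    rw [mul_div_cancel_right₀ _ hu] at this
    exact Complex.reCLM.hasFDerivAt.comp_hasDerivAt t this
  obtain ⟨c, hc, hgc⟩ := exists_hasDerivAt_eq_slope g _ zero_lt_one
    (fun t ht => (hg t ht).continuousAt.continuousWithinAt)
    (fun t ht => hg t (Ioo_subset_Icc_self ht))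
  have hg01 : g 1 = g 0 := by simp [g, u, hzz']
  rw [hg01, sub_self, zero_div] at hgc
  exact (hf' _ (hseg c (Ioo_subset_Icc_self hc))).ne' hgc

theorem re_cosh_nonneg_of_abs_im_le {w : ℂ} (hw : |w.im| ≤ π / 2) : 0 ≤ (Complex.cosh w).re := by
  rw [Complex.cosh_re]
  exact mul_nonneg (Real.cosh_pos _).le (Real.cos_nonneg_of_mem_Icc (abs_le.1 hw))

theorem injOn_add_sinh : InjOn (fun w => w + Complex.sinh w) {w : ℂ | |w.im| ≤ π / 2} :=
  (convex_abs_im_le _).injOn_of_hasDerivAt_of_re_pos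
    (fun w _ => (hasDerivAt_id w).add (Complex.hasDerivAt_sinh w))
    (fun w hw => by
      simpa using add_pos_of_pos_of_nonneg one_pos (re_cosh_nonneg_of_abs_im_le hw))

/-- `F(z) = z + sinh z` is injective on the closed strip `{|Im z| ≤ π/2}`. -/
theorem F_injOn_closed_strip (z z' : ℂ)
    (hz : |z.im| ≤ π / 2) (hz' : |z'.im| ≤ π / 2)
    (h : z + Complex.sinh z = z' + Complex.sinh z') : z = z' :=
  injOn_add_sinh hz hz' h
end

section
/- Let κ > 0 and let Ω ⊆ {z ∈ ℂ : Re z ≥ κ·|Im z|} be a nonempty open set. If u : ℂ → ℝ is continuous on the closure of Ω, harmonic on Ω, bounded on Ω, and vanishes at every point of the frontier ∂Ω, then u vanishes identically on Ω. -/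
open Real

/-- A function `u : ℂ → ℝ` is harmonic on a set `Ω`: twice continuously
differentiable on `Ω` with vanishing Laplacian there. -/
def HarmonicOnSet (u : ℂ → ℝ) (Ω : Set ℂ) : Prop :=
  ContDiffOn ℝ 2 u Ω ∧
  ∀ z ∈ Ω,
    fderiv ℝ (fun w => fderiv ℝ u w 1) z 1 +
      fderiv ℝ (fun w => fderiv ℝ u w Complex.I) z Complex.I = 0

/-!
On the wedge `κ |Im z| ≤ Re z` one has `κ ‖z‖ ≤ (κ + 1) Re z`, so the harmonic function `Re` is a
barrier: for `ε > 0` and `R` large, `u - ε Re` is harmonic on `Ω ∩ B(0, R)` and `≤ 0` on its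
frontier (`u = 0` on `∂Ω`, and `u ≤ C ≤ ε Re` where `‖z‖ = R`). By the maximum principle
`u ≤ ε Re` on `Ω`; letting `ε → 0` gives `u ≤ 0`, and likewise `-u ≤ 0`.

The maximum principle comes from the second-derivative test: at an interior maximum the
Laplacian is `≤ 0`, which excludes an interior maximum of `f + η ‖x‖²` when `Δ f ≥ 0`.
-/

open Topology Laplacian InnerProductSpace

theorem IsLocalMax.deriv_deriv_nonpos {φ : ℝ → ℝ} {t : ℝ} (hc : ContinuousAt φ t)
    (hmax : IsLocalMax φ t) : deriv (deriv φ) t ≤ 0 := by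
  by_contra! hpos
  have hmin : IsLocalMin φ t := isLocalMin_of_deriv_deriv_pos hpos hmax.deriv_eq_zero hc
  have hconst : φ =ᶠ[𝓝 t] fun _ => φ t := by
    filter_upwards [hmin, hmax] with s h₁ h₂ using le_antisymm h₂ h₁
  have hderiv : deriv φ =ᶠ[𝓝 t] 0 := by
    filter_upwards [hconst.eventuallyEq_nhds] with s hs
    rw [hs.deriv_eq, deriv_const]
    rfl
  rw [hderiv.deriv_eq] at hpos
  simp at hpos

theorem ContDiffAt.fderiv_fderiv_apply_eq_iteratedFDeriv {𝕜 E F : Type*}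
    [NontriviallyNormedField 𝕜] [NormedAddCommGroup E] [NormedSpace 𝕜 E]
    [NormedAddCommGroup F] [NormedSpace 𝕜 F] {f : E → F} {x : E}
    (hf : ContDiffAt 𝕜 2 f x) (v w : E) :
    fderiv 𝕜 (fun y => fderiv 𝕜 f y v) x w = iteratedFDeriv 𝕜 2 f x ![w, v] := by
  have hd : DifferentiableAt 𝕜 (fderiv 𝕜 f) x :=
    (hf.fderiv_right (m := 1) (by norm_num)).differentiableAt (by norm_num)
  rw [fderiv_clm_apply hd (differentiableAt_const v), iteratedFDeriv_two_apply]
  simp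

theorem IsLocalMax.iteratedFDeriv_two_nonpos {E : Type*} [NormedAddCommGroup E]
    [NormedSpace ℝ E] {f : E → ℝ} {x : E} (hf : ContDiffAt ℝ 2 f x) (hmax : IsLocalMax f x)
    (v : E) : iteratedFDeriv ℝ 2 f x ![v, v] ≤ 0 := by
  set φ : ℝ → ℝ := fun t => f (x + t • v)
  have hline : ∀ t : ℝ, HasDerivAt (fun t : ℝ => x + t • v) v t := fun t => by
    simpa using ((hasDerivAt_id t).smul_const v).const_add x
  have hline_tendsto : Filter.Tendsto (fun t : ℝ => x + t • v) (𝓝 0) (𝓝 x) := by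
    simpa using (hline 0).continuousAt.tendsto
  have hderiv : deriv φ =ᶠ[𝓝 0] fun t => fderiv ℝ f (x + t • v) v := by
    filter_upwards [hline_tendsto.eventually (hf.eventually (by simp))] with t ht
    exact ((ht.differentiableAt (by norm_num)).hasFDerivAt.comp_hasDerivAt t (hline t)).deriv
  have hsecond : deriv (deriv φ) 0 = iteratedFDeriv ℝ 2 f x ![v, v] := by
    have hd : DifferentiableAt ℝ (fun y => fderiv ℝ f y v) x :=
      ((hf.fderiv_right (m := 1) (by norm_num)).differentiableAt (by norm_num)).clm_apply
        (differentiableAt_const v)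
    rw [hderiv.deriv_eq, ← hf.fderiv_fderiv_apply_eq_iteratedFDeriv]
    exact (hd.hasFDerivAt.comp_hasDerivAt_of_eq (x := (0 : ℝ)) (hline 0) (by simp)).deriv
  rw [← hsecond]
  refine IsLocalMax.deriv_deriv_nonpos ?_ ?_
  · exact hf.continuousAt.comp_of_eq (hline 0).continuousAt (by simp)
  · show ∀ᶠ t in 𝓝 0, φ t ≤ φ 0
    simpa [φ] using hline_tendsto.eventually hmax

section MaximumPrinciple

variable {E : Type*} [NormedAddCommGroup E] [InnerProductSpace ℝ E] [FiniteDimensional ℝ E]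

theorem IsLocalMax.laplacian_nonpos {f : E → ℝ} {x : E} (hf : ContDiffAt ℝ 2 f x)
    (hmax : IsLocalMax f x) : Δ f x ≤ 0 := by
  rw [laplacian_eq_iteratedFDeriv_stdOrthonormalBasis]
  exact Finset.sum_nonpos fun i _ => hmax.iteratedFDeriv_two_nonpos hf _

theorem laplacian_norm_sq (x : E) :
    Δ (fun y : E => ‖y‖ ^ 2) x = 2 * Module.finrank ℝ E := by
  have h : fderiv ℝ (fderiv ℝ fun y : E => ‖y‖ ^ 2) x = (2 : ℝ) • innerSL ℝ := by
    rw [show fderiv ℝ (fun y : E => ‖y‖ ^ 2) = ⇑((2 : ℝ) • innerSL ℝ (E := E)) by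
      rw [fderiv_norm_sq]; ext; simp, ContinuousLinearMap.fderiv]
  simp only [laplacian_eq_iteratedFDeriv_stdOrthonormalBasis, iteratedFDeriv_two_apply, h]
  simp [innerSL_apply_apply ℝ, mul_comm]

variable {f : E → ℝ} {S : Set E} {M : ℝ}

theorem le_of_forall_mem_frontier_le_of_laplacian_pos (hS : IsOpen S)
    (hSb : Bornology.IsBounded S) (hc : ContinuousOn f (closure S))
    (hf : ∀ x ∈ S, ContDiffAt ℝ 2 f x) (hΔ : ∀ x ∈ S, 0 < Δ f x)
    (hfr : ∀ x ∈ frontier S, f x ≤ M) {x : E} (hx : x ∈ S) : f x ≤ M := by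
  obtain ⟨y, hy, hmax⟩ := hSb.isCompact_closure.exists_isMaxOn ⟨x, subset_closure hx⟩ hc
  have hyS : y ∉ S := fun hyS => (hΔ y hyS).not_ge <|
    (hmax.isLocalMax (Filter.mem_of_superset (hS.mem_nhds hyS) subset_closure)).laplacian_nonpos
      (hf y hyS)
  exact (hmax (subset_closure hx)).trans (hfr y ⟨hy, by rwa [hS.interior_eq]⟩)

theorem le_of_forall_mem_frontier_le_of_laplacian_nonneg [Nontrivial E] (hS : IsOpen S)
    (hSb : Bornology.IsBounded S) (hc : ContinuousOn f (closure S))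
    (hf : ∀ x ∈ S, ContDiffAt ℝ 2 f x) (hΔ : ∀ x ∈ S, 0 ≤ Δ f x)
    (hfr : ∀ x ∈ frontier S, f x ≤ M) {x : E} (hx : x ∈ S) : f x ≤ M := by
  obtain ⟨R, hR⟩ := hSb.closure.subset_closedBall 0
  have hnorm : ∀ y ∈ closure S, ‖y‖ ^ 2 ≤ R ^ 2 := fun y hy => by
    have := mem_closedBall_zero_iff.mp (hR hy)
    gcongr
  refine le_of_forall_pos_le_add fun δ hδ => ?_
  set η := δ / (R ^ 2 + 1)
  have hη : 0 < η := by positivity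
  have hηR : η * R ^ 2 ≤ δ := by
    rw [div_mul_eq_mul_div, div_le_iff₀ (by positivity)]
    nlinarith
  have hq : ContDiff ℝ 2 fun y : E => ‖y‖ ^ 2 := contDiff_norm_sq ℝ
  have hηq : ∀ y, ContDiffAt ℝ 2 (η • fun y : E => ‖y‖ ^ 2) y := fun y =>
    hq.contDiffAt.const_smul η
  have key : f x + η * ‖x‖ ^ 2 ≤ M + η * R ^ 2 := by
    refine le_of_forall_mem_frontier_le_of_laplacian_pos (f := f + η • fun y : E => ‖y‖ ^ 2)
      hS hSb ?_
      (fun y hy => (hf y hy).add (hηq y)) ?_ ?_ hx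
    · exact hc.add (continuousOn_const.smul hq.continuous.continuousOn)
    · intro y hy
      rw [(hf y hy).laplacian_add (hηq y), laplacian_smul η hq.contDiffAt, laplacian_norm_sq,
        smul_eq_mul]
      have := Module.finrank_pos (R := ℝ) (M := E)
      have := hΔ y hy
      positivity
    · intro y hy
      show f y + η * ‖y‖ ^ 2 ≤ M + η * R ^ 2
      nlinarith [hfr y hy, hnorm y hy.1]
  linarith [mul_nonneg hη.le (sq_nonneg ‖x‖)]

end MaximumPrinciple

theorem HarmonicOnSet.harmonicOnNhd {u : ℂ → ℝ} {Ω : Set ℂ} (h : HarmonicOnSet u Ω)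
    (hΩ : IsOpen Ω) : HarmonicOnNhd u Ω := fun x hx => by
  have hC : ∀ y ∈ Ω, ContDiffAt ℝ 2 u y := fun y hy => h.1.contDiffAt (hΩ.mem_nhds hy)
  refine ⟨hC x hx, ?_⟩
  filter_upwards [hΩ.mem_nhds hx] with y hy
  rw [laplacian_eq_iteratedFDeriv_complexPlane]
  change iteratedFDeriv ℝ 2 u y _ + iteratedFDeriv ℝ 2 u y _ = 0
  rw [← (hC y hy).fderiv_fderiv_apply_eq_iteratedFDeriv,
    ← (hC y hy).fderiv_fderiv_apply_eq_iteratedFDeriv]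
  exact h.2 y hy

theorem Complex.mul_norm_le_of_mul_abs_im_le_re {κ : ℝ} (hκ : 0 < κ) {z : ℂ}
    (hz : κ * |z.im| ≤ z.re) : κ * ‖z‖ ≤ (κ + 1) * z.re := by
  have hre : |z.re| = z.re := abs_of_nonneg ((by positivity : 0 ≤ κ * |z.im|).trans hz)
  nlinarith [Complex.norm_le_abs_re_add_abs_im z]

namespace InnerProductSpace.HarmonicOnNhd

variable {κ : ℝ} {Ω : Set ℂ} {v : ℂ → ℝ} {C : ℝ} {z₀ : ℂ}

theorem le_mul_re_of_subset_wedge (hκ : 0 < κ) (hΩ : IsOpen Ω)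
    (hwedge : Ω ⊆ {z : ℂ | κ * |z.im| ≤ z.re}) (hv : HarmonicOnNhd v Ω)
    (hc : ContinuousOn v (closure Ω)) (hC : ∀ z ∈ Ω, v z ≤ C)
    (hfr : ∀ z ∈ frontier Ω, v z ≤ 0) {ε : ℝ} (hε : 0 < ε) (hz₀ : z₀ ∈ Ω) :
    v z₀ ≤ ε * z₀.re := by
  have hcl : closure Ω ⊆ {z : ℂ | κ * |z.im| ≤ z.re} :=
    closure_minimal hwedge (isClosed_le (by fun_prop) Complex.continuous_re)
  have hre : ∀ z, HarmonicAt Complex.re z := fun z => analyticAt_id.harmonicAt_re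
  obtain ⟨R, hz₀R, hR⟩ : ∃ R, ‖z₀‖ < R ∧ ∀ z ∈ closure Ω, R ≤ ‖z‖ → C ≤ ε * z.re := by
    refine ⟨max (‖z₀‖ + 1) ((κ + 1) * C / (κ * ε)), by simp, fun z hz hRz => ?_⟩
    have h₁ := Complex.mul_norm_le_of_mul_abs_im_le_re hκ (hcl hz)
    have h₂ : (κ + 1) * C / (κ * ε) ≤ ‖z‖ := (le_max_right _ _).trans hRz
    rw [div_le_iff₀ (by positivity)] at h₂
    nlinarith
  have hS : IsOpen (Ω ∩ Metric.ball 0 R) := hΩ.inter Metric.isOpen_ball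
  have hclS : closure (Ω ∩ Metric.ball 0 R) ⊆ closure Ω := closure_mono Set.inter_subset_left
  suffices hfrS : ∀ z ∈ frontier (Ω ∩ Metric.ball 0 R), (v - ε • Complex.re) z ≤ 0 by
    have := le_of_forall_mem_frontier_le_of_laplacian_nonneg hS
      (Metric.isBounded_ball.subset Set.inter_subset_right)
      ((hc.mono hclS).sub (continuousOn_const.smul Complex.continuous_re.continuousOn))
      (fun z hz => ((hv z hz.1).sub (hre z).const_smul).1)
      (fun z hz => ((hv z hz.1).sub (hre z).const_smul).2.eq_of_nhds.ge)
      hfrS ⟨hz₀, mem_ball_zero_iff.mpr hz₀R⟩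
    simpa [sub_nonpos] using this
  intro z hz
  have hzΩ : z ∈ closure Ω := hclS hz.1
  simp only [Pi.sub_apply, Pi.smul_apply, smul_eq_mul, sub_nonpos]
  by_cases hzΩ' : z ∈ Ω
  · have hRz : R ≤ ‖z‖ := by
      by_contra! h
      exact hz.2 (by rw [hS.interior_eq]; exact ⟨hzΩ', mem_ball_zero_iff.mpr h⟩)
    exact (hC z hzΩ').trans (hR z hzΩ hRz)
  · have hre_nonneg : 0 ≤ z.re := (by positivity : 0 ≤ κ * |z.im|).trans (hcl hzΩ)
    exact (hfr z ⟨hzΩ, by rwa [hΩ.interior_eq]⟩).trans (mul_nonneg hε.le hre_nonneg)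

theorem nonpos_of_subset_wedge (hκ : 0 < κ) (hΩ : IsOpen Ω)
    (hwedge : Ω ⊆ {z : ℂ | κ * |z.im| ≤ z.re}) (hv : HarmonicOnNhd v Ω)
    (hc : ContinuousOn v (closure Ω)) (hC : ∀ z ∈ Ω, v z ≤ C)
    (hfr : ∀ z ∈ frontier Ω, v z ≤ 0) (hz₀ : z₀ ∈ Ω) : v z₀ ≤ 0 := by
  have hre₀ : 0 ≤ z₀.re := (by positivity : 0 ≤ κ * |z₀.im|).trans (hwedge hz₀)
  refine le_of_forall_pos_le_add fun δ hδ =>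
    (hv.le_mul_re_of_subset_wedge hκ hΩ hwedge hc hC hfr (ε := δ / (z₀.re + 1))
      (by positivity) hz₀).trans ?_
  rw [zero_add, div_mul_eq_mul_div, div_le_iff₀ (by positivity)]
  nlinarith

end InnerProductSpace.HarmonicOnNhd

theorem bounded_harmonic_on_wedge_domain_eq_zero_general
    (κ : ℝ) (hκ : 0 < κ) (Ω : Set ℂ) (hopen : IsOpen Ω)
    (hwedge : Ω ⊆ {z : ℂ | κ * |z.im| ≤ z.re})
    (u : ℂ → ℝ)
    (hcont : ContinuousOn u (closure Ω))
    (hharm : HarmonicOnSet u Ω)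
    (hbdd : ∃ C : ℝ, ∀ z ∈ Ω, |u z| ≤ C)
    (hbd : ∀ z ∈ frontier Ω, u z = 0) :
    ∀ z ∈ Ω, u z = 0 := by
  obtain ⟨C, hC⟩ := hbdd
  have hu := hharm.harmonicOnNhd hopen
  intro z hz
  have hle : u z ≤ 0 := hu.nonpos_of_subset_wedge hκ hopen hwedge hcont
    (fun w hw => (le_abs_self _).trans (hC w hw)) (fun w hw => (hbd w hw).le) hz
  have hge : -u z ≤ 0 := hu.neg.nonpos_of_subset_wedge hκ hopen hwedge hcont.neg
    (fun w hw => (neg_le_abs _).trans (hC w hw)) (fun w hw => by simp [hbd w hw]) hz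
  linarith

/-- On an open set contained in a wedge, a bounded harmonic function which is
continuous up to the boundary and vanishes on the frontier vanishes
identically. -/
theorem bounded_harmonic_on_wedge_domain_eq_zero
    (κ : ℝ) (hκ : 0 < κ) (Ω : Set ℂ) (hne : Ω.Nonempty) (hopen : IsOpen Ω)
    (hwedge : Ω ⊆ {z : ℂ | κ * |z.im| ≤ z.re})
    (u : ℂ → ℝ)
    (hcont : ContinuousOn u (closure Ω))
    (hharm : HarmonicOnSet u Ω)
    (hbdd : ∃ C : ℝ, ∀ z ∈ Ω, |u z| ≤ C)
    (hbd : ∀ z ∈ frontier Ω, u z = 0) :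
    ∀ z ∈ Ω, u z = 0 :=
  bounded_harmonic_on_wedge_domain_eq_zero_general κ hκ Ω hopen hwedge u hcont hharm hbdd hbd
end
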